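/- arXiv:2212.08963 — 3 statements merged into one kernel-verified Lean document; each statement's English description precedes it below -/
import Mathlib

section
/- Let q be a prime power and, for t ≥ 1, let R^*(t) = Σ_G 1/q^{deg G}, the sum over all squarefree monic polynomials G ∈ F_q[X] not divisible by X with ord(G) ≤ t. Then R^*(t) = o(t) as t → ∞; in fact R^*(t) = O(log t). -/
open Polynomial Filter

/-- The order of a polynomial `F ∈ F_q[X]` not divisible by `X`:
the least `j > 0` such that `F ∣ X^j - 1`. -/
noncomputable def polyOrd {Fq : Type*} [Field Fq] (F : Polynomial Fq) : ℕ :=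
  sInf {j : ℕ | 0 < j ∧ F ∣ Polynomial.X ^ j - 1}

/-!
Write `T = ⌊t⌋`. Each `G` in the sum is the product of its distinct monic irreducible factors `P`,
and these satisfy `P ≠ X` and `ord P ≤ ord G ≤ T`. Hence `R^*(t) ≤ ∏_P (1 + q^{-deg P})`, which is
at most `exp (∑_P q^{-deg P})`, over all such `P`. All of them divide `∏_{j ≤ T} (X^j - 1)`, so
there are at most `T²` of them, while at most `q^d / d` monic irreducibles have degree `d`, as they
divide `X^{q^d} - X`. Splitting at the degree `D = ⌈log_q T²⌉` bounds the sum by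
`H_D + T² / q^D ≤ 2 + log D`, so `R^*(t) ≤ e² D = O(log t)`.
-/

open UniqueFactorizationMonoid

namespace Polynomial

variable {K : Type*} [Field K]

theorem finite_setOf_natDegree_le [Finite K] (n : ℕ) : {p : K[X] | p.natDegree ≤ n}.Finite := by
  have : Finite (degreeLT K (n + 1)) := .of_equiv _ (degreeLTEquiv K (n + 1)).toEquiv.symm
  refine (degreeLT K (n + 1) : Set K[X]).toFinite.subset fun p hp => ?_
  rw [SetLike.mem_coe, mem_degreeLT]
  exact (degree_le_natDegree).trans_lt (WithBot.coe_lt_coe.2 (Nat.lt_succ_of_le hp))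

theorem isCoprime_of_monic_of_irreducible {P Q : K[X]} (hP : P.Monic) (hQ : Q.Monic)
    (hPi : Irreducible P) (hQi : Irreducible Q) (hne : P ≠ Q) : IsCoprime P Q :=
  hPi.coprime_iff_not_dvd.2 fun h =>
    hne (eq_of_monic_of_associated hP hQ (hPi.associated_of_dvd hQi h))

theorem sum_natDegree_le_of_forall_dvd {S : Finset K[X]} (hS : ∀ P ∈ S, P.Monic ∧ Irreducible P)
    {M : K[X]} (hM : M ≠ 0) (hdvd : ∀ P ∈ S, P ∣ M) : ∑ P ∈ S, P.natDegree ≤ M.natDegree := by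
  have hprod : ∏ P ∈ S, P ∣ M := Finset.prod_dvd_of_coprime
    (fun P hP Q hQ hne => isCoprime_of_monic_of_irreducible (hS P hP).1 (hS Q hQ).1 (hS P hP).2
      (hS Q hQ).2 hne) hdvd
  rw [← natDegree_prod _ _ fun P hP => (hS P hP).1.ne_zero]
  exact natDegree_le_of_dvd hprod hM

theorem card_mul_le_of_forall_natDegree_eq [Finite K] {S : Finset K[X]}
    (hS : ∀ P ∈ S, P.Monic ∧ Irreducible P) {d : ℕ} (hd : d ≠ 0)
    (hdeg : ∀ P ∈ S, P.natDegree = d) : S.card * d ≤ Nat.card K ^ d := by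
  have hq : 1 < Nat.card K := Finite.one_lt_card
  have hsum := sum_natDegree_le_of_forall_dvd hS (FiniteField.X_pow_card_pow_sub_X_ne_zero K hd hq)
    fun P hP => (hS P hP).2.natDegree_dvd_iff_dvd_X_pow_card_pow_sub_X.1 (hdeg P hP ▸ dvd_rfl)
  rwa [FiniteField.X_pow_card_pow_sub_X_natDegree_eq K hd hq, Finset.sum_congr rfl hdeg,
    Finset.sum_const, smul_eq_mul] at hsum

theorem monic_and_irreducible_of_mem_normalizedFactors [DecidableEq K] {G P : K[X]}
    (hP : P ∈ normalizedFactors G) : P.Monic ∧ Irreducible P := by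
  refine ⟨?_, irreducible_of_normalized_factor P hP⟩
  rw [← normalize_normalized_factor P hP]
  exact monic_normalize (prime_of_normalized_factor P hP).ne_zero

theorem Monic.prod_normalizedFactors_toFinset [DecidableEq K] {G : K[X]} (hG : G.Monic)
    (hsq : Squarefree G) : ∏ P ∈ (normalizedFactors G).toFinset, P = G := by
  have hnd := (squarefree_iff_nodup_normalizedFactors hG.ne_zero).1 hsq
  rw [Finset.prod_eq_multiset_prod, Multiset.toFinset_val, hnd.dedup, Multiset.map_id',
    prod_normalizedFactors_eq hG.ne_zero, hG.normalize_eq_self]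

theorem sum_pow_natDegree_le_prod_one_add {S T : Finset K[X]} (hS : ∀ P ∈ S, P ≠ 0)
    (hT : ∀ G ∈ T, ∃ A ⊆ S, ∏ P ∈ A, P = G) {c : ℝ} (hc : 0 ≤ c) :
    ∑ G ∈ T, c ^ G.natDegree ≤ ∏ P ∈ S, (1 + c ^ P.natDegree) := by
  classical
  have hsub : T ⊆ S.powerset.image fun A => ∏ P ∈ A, P := fun G hG => by
    obtain ⟨A, hA, rfl⟩ := hT G hG
    exact Finset.mem_image_of_mem _ (Finset.mem_powerset.2 hA)
  calc ∑ G ∈ T, c ^ G.natDegree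
      ≤ ∑ G ∈ S.powerset.image fun A => ∏ P ∈ A, P, c ^ G.natDegree :=
        Finset.sum_le_sum_of_subset_of_nonneg hsub fun _ _ _ => by positivity
    _ ≤ ∑ A ∈ S.powerset, c ^ (∏ P ∈ A, P).natDegree :=
        Finset.sum_image_le_of_nonneg fun _ _ => by positivity
    _ = ∑ A ∈ S.powerset, ∏ P ∈ A, c ^ P.natDegree := Finset.sum_congr rfl fun A hA => by
        rw [natDegree_prod _ _ fun P hP => hS P (Finset.mem_powerset.1 hA hP),
          Finset.prod_pow_eq_pow_sum]
    _ = ∏ P ∈ S, (1 + c ^ P.natDegree) := (Finset.prod_one_add S).symm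

theorem X_pow_sub_one_ne_zero {j : ℕ} (hj : j ≠ 0) : (X ^ j - 1 : K[X]) ≠ 0 := by
  simpa using (monic_X_pow_sub_C (1 : K) hj).ne_zero

theorem natDegree_X_pow_sub_one (j : ℕ) : (X ^ j - 1 : K[X]).natDegree = j := by
  simpa using natDegree_X_pow_sub_C (n := j) (r := (1 : K))

end Polynomial

section polyOrd

variable {K : Type*} [Field K]

theorem exists_dvd_X_pow_sub_one [Finite K] {G : K[X]} (hG : G ≠ 0) (hX : ¬X ∣ G) :
    ∃ j, 0 < j ∧ G ∣ X ^ j - 1 := by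
  have : Module.Finite K (AdjoinRoot G) := (AdjoinRoot.powerBasis hG).finite
  have : Finite (AdjoinRoot G) := Module.finite_of_finite K
  obtain ⟨a, b, hab⟩ := irreducible_X.coprime_iff_not_dvd.2 hX
  have hunit : IsUnit (AdjoinRoot.mk G X) := .of_mul_eq_one_right (AdjoinRoot.mk G a) <| by
    simpa using congrArg (AdjoinRoot.mk G) hab
  obtain ⟨j, hj, hpow⟩ := isOfFinOrder_iff_pow_eq_one.1 hunit.isOfFinOrder
  exact ⟨j, hj, by rwa [← AdjoinRoot.mk_eq_zero, map_sub, map_pow, map_one, sub_eq_zero]⟩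

theorem polyOrd_le {G : K[X]} {j : ℕ} (hj : 0 < j) (h : G ∣ X ^ j - 1) : polyOrd G ≤ j :=
  Nat.sInf_le ⟨hj, h⟩

variable [Finite K] {G : K[X]} (hG : G ≠ 0) (hX : ¬X ∣ G)
include hG hX

theorem polyOrd_pos_and_dvd : 0 < polyOrd G ∧ G ∣ X ^ polyOrd G - 1 :=
  Nat.sInf_mem (exists_dvd_X_pow_sub_one hG hX)

theorem natDegree_le_polyOrd : G.natDegree ≤ polyOrd G := by
  obtain ⟨hpos, hdvd⟩ := polyOrd_pos_and_dvd hG hX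
  simpa [natDegree_X_pow_sub_one] using natDegree_le_of_dvd hdvd (X_pow_sub_one_ne_zero hpos.ne')

theorem polyOrd_le_polyOrd_of_dvd {P : K[X]} (hP : P ∣ G) : polyOrd P ≤ polyOrd G :=
  polyOrd_le (polyOrd_pos_and_dvd hG hX).1 (hP.trans (polyOrd_pos_and_dvd hG hX).2)

end polyOrd

theorem finite_setOf_polyOrd_le {K : Type*} [Field K] [Finite K] (T : ℕ) :
    {G : K[X] | G ≠ 0 ∧ ¬X ∣ G ∧ polyOrd G ≤ T}.Finite :=
  (finite_setOf_natDegree_le T).subset fun _ ⟨hG, hX, hT⟩ => (natDegree_le_polyOrd hG hX).trans hT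

section Counting

variable {K : Type*} [Field K] [Finite K]

theorem sum_natDegree_le_of_polyOrd_le {S : Finset K[X]} {T : ℕ}
    (hS : ∀ P ∈ S, P.Monic ∧ Irreducible P ∧ ¬X ∣ P ∧ polyOrd P ≤ T) :
    ∑ P ∈ S, P.natDegree ≤ T * T := by
  have hne : ∀ j ∈ Finset.Icc 1 T, (X ^ j - 1 : K[X]) ≠ 0 := fun j hj =>
    X_pow_sub_one_ne_zero (Nat.one_le_iff_ne_zero.1 (Finset.mem_Icc.1 hj).1)
  have hdvd : ∀ P ∈ S, P ∣ ∏ j ∈ Finset.Icc 1 T, (X ^ j - 1 : K[X]) := fun P hP => by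
    obtain ⟨hm, -, hX, hT⟩ := hS P hP
    obtain ⟨hpos, hP⟩ := polyOrd_pos_and_dvd hm.ne_zero hX
    exact hP.trans (Finset.dvd_prod_of_mem _ (Finset.mem_Icc.2 ⟨hpos, hT⟩))
  calc ∑ P ∈ S, P.natDegree
      ≤ (∏ j ∈ Finset.Icc 1 T, (X ^ j - 1 : K[X])).natDegree :=
        sum_natDegree_le_of_forall_dvd (fun P hP => ⟨(hS P hP).1, (hS P hP).2.1⟩)
          (Finset.prod_ne_zero_iff.2 hne) hdvd
    _ = ∑ j ∈ Finset.Icc 1 T, j := by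
        rw [natDegree_prod _ _ hne]
        exact Finset.sum_congr rfl fun j _ => natDegree_X_pow_sub_one j
    _ ≤ T * T := by
        simpa using
          Finset.sum_le_card_nsmul (Finset.Icc 1 T) id T fun j hj => (Finset.mem_Icc.1 hj).2

theorem sum_inv_pow_natDegree_le_inv {S : Finset K[X]} (hS : ∀ P ∈ S, P.Monic ∧ Irreducible P)
    {d : ℕ} (hd : d ≠ 0) (hdeg : ∀ P ∈ S, P.natDegree = d) :
    ∑ P ∈ S, (Nat.card K : ℝ)⁻¹ ^ P.natDegree ≤ (d : ℝ)⁻¹ := by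
  have hcard : (S.card * d : ℝ) ≤ (Nat.card K : ℝ) ^ d := by
    exact_mod_cast card_mul_le_of_forall_natDegree_eq hS hd hdeg
  have hq : (0 : ℝ) < Nat.card K := by exact_mod_cast Nat.card_pos
  rw [Finset.sum_congr rfl fun P hP => by rw [hdeg P hP], Finset.sum_const, nsmul_eq_mul, inv_pow,
    ← div_eq_mul_inv, div_le_iff₀ (by positivity), ← div_eq_inv_mul, le_div_iff₀ (by positivity)]
  exact hcard

theorem sum_filter_inv_pow_natDegree_le_harmonic {S : Finset K[X]}
    (hS : ∀ P ∈ S, P.Monic ∧ Irreducible P) (D : ℕ) :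
    ∑ P ∈ S with P.natDegree ≤ D, (Nat.card K : ℝ)⁻¹ ^ P.natDegree ≤ harmonic D := by
  have hmaps : ∀ P ∈ S.filter (·.natDegree ≤ D), P.natDegree ∈ Finset.Icc 1 D := fun P hP => by
    rw [Finset.mem_filter] at hP
    exact Finset.mem_Icc.2 ⟨(hS P hP.1).2.natDegree_pos, hP.2⟩
  rw [← Finset.sum_fiberwise_of_maps_to hmaps, harmonic_eq_sum_Icc]
  push_cast
  refine Finset.sum_le_sum fun d hd => sum_inv_pow_natDegree_le_inv
    (fun P hP => hS P (Finset.mem_filter.1 (Finset.mem_filter.1 hP).1).1)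
    (Nat.one_le_iff_ne_zero.1 (Finset.mem_Icc.1 hd).1) fun P hP => (Finset.mem_filter.1 hP).2

theorem sum_filter_inv_pow_natDegree_le_card_div (S : Finset K[X]) (D : ℕ) :
    ∑ P ∈ S with ¬P.natDegree ≤ D, (Nat.card K : ℝ)⁻¹ ^ P.natDegree ≤
      S.card / (Nat.card K : ℝ) ^ D := by
  have hq : (Nat.card K : ℝ)⁻¹ ≤ 1 := inv_le_one_of_one_le₀ (by exact_mod_cast Nat.card_pos)
  calc ∑ P ∈ S with ¬P.natDegree ≤ D, (Nat.card K : ℝ)⁻¹ ^ P.natDegree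
      ≤ ∑ P ∈ S with ¬P.natDegree ≤ D, (Nat.card K : ℝ)⁻¹ ^ D := Finset.sum_le_sum fun P hP =>
        pow_le_pow_of_le_one (by positivity) hq (not_le.1 (Finset.mem_filter.1 hP).2).le
    _ ≤ S.card * (Nat.card K : ℝ)⁻¹ ^ D := by
        rw [Finset.sum_const, nsmul_eq_mul]
        gcongr
        exact Finset.filter_subset _ S
    _ = S.card / (Nat.card K : ℝ) ^ D := by rw [inv_pow, div_eq_mul_inv]

theorem sum_inv_pow_natDegree_le_two_add_log {S : Finset K[X]}
    (hS : ∀ P ∈ S, P.Monic ∧ Irreducible P) {D : ℕ} (hcard : S.card ≤ Nat.card K ^ D) :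
    ∑ P ∈ S, (Nat.card K : ℝ)⁻¹ ^ P.natDegree ≤ 2 + Real.log D := by
  have htail : (S.card : ℝ) / (Nat.card K : ℝ) ^ D ≤ 1 :=
    div_le_one_of_le₀ (by exact_mod_cast hcard) (by positivity)
  rw [← Finset.sum_filter_add_sum_filter_not S (·.natDegree ≤ D)]
  linarith [sum_filter_inv_pow_natDegree_le_harmonic hS D, harmonic_le_one_add_log D,
    sum_filter_inv_pow_natDegree_le_card_div S D]

end Counting

theorem finsum_squarefree_polyOrd_le_le_exp {K : Type*} [Field K] [Finite K] {T : ℕ} (hT : 2 ≤ T) :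
    ∑ᶠ G ∈ {G : K[X] | Squarefree G ∧ G.Monic ∧ ¬X ∣ G ∧ polyOrd G ≤ T},
      (Nat.card K : ℝ)⁻¹ ^ G.natDegree ≤ Real.exp 2 * Nat.clog (Nat.card K) (T * T) := by
  classical
  set D := Nat.clog (Nat.card K) (T * T)
  have hfinG : {G : K[X] | Squarefree G ∧ G.Monic ∧ ¬X ∣ G ∧ polyOrd G ≤ T}.Finite :=
    (finite_setOf_polyOrd_le T).subset fun _ ⟨_, hm, hX, hT⟩ => ⟨hm.ne_zero, hX, hT⟩
  have hfinP : {P : K[X] | P.Monic ∧ Irreducible P ∧ ¬X ∣ P ∧ polyOrd P ≤ T}.Finite :=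
    (finite_setOf_polyOrd_le T).subset fun _ ⟨hm, _, hX, hT⟩ => ⟨hm.ne_zero, hX, hT⟩
  set S := hfinP.toFinset
  have hS : ∀ P ∈ S, P.Monic ∧ Irreducible P ∧ ¬X ∣ P ∧ polyOrd P ≤ T := fun P hP =>
    hfinP.mem_toFinset.1 hP
  have hfactor : ∀ G ∈ hfinG.toFinset, ∃ A ⊆ S, ∏ P ∈ A, P = G := fun G hG => by
    obtain ⟨hsq, hm, hX, hT⟩ := hfinG.mem_toFinset.1 hG
    refine ⟨(normalizedFactors G).toFinset, fun P hP => ?_, hm.prod_normalizedFactors_toFinset hsq⟩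
    rw [Multiset.mem_toFinset] at hP
    have hPG := dvd_of_mem_normalizedFactors hP
    exact hfinP.mem_toFinset.2 ⟨(monic_and_irreducible_of_mem_normalizedFactors hP).1,
      (monic_and_irreducible_of_mem_normalizedFactors hP).2, fun h => hX (h.trans hPG),
      (polyOrd_le_polyOrd_of_dvd hm.ne_zero hX hPG).trans hT⟩
  have hcard : S.card ≤ Nat.card K ^ D := calc
    S.card ≤ ∑ P ∈ S, P.natDegree := by
      simpa using Finset.card_nsmul_le_sum S natDegree 1 fun P hP => (hS P hP).2.1.natDegree_pos
    _ ≤ T * T := sum_natDegree_le_of_polyOrd_le hS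
    _ ≤ Nat.card K ^ D := Nat.le_pow_clog Finite.one_lt_card _
  have hD : (0 : ℝ) < D := by exact_mod_cast Nat.clog_pos Finite.one_lt_card (by nlinarith)
  calc ∑ᶠ G ∈ {G : K[X] | Squarefree G ∧ G.Monic ∧ ¬X ∣ G ∧ polyOrd G ≤ T},
        (Nat.card K : ℝ)⁻¹ ^ G.natDegree
      = ∑ G ∈ hfinG.toFinset, (Nat.card K : ℝ)⁻¹ ^ G.natDegree :=
        finsum_mem_eq_finite_toFinset_sum _ hfinG
    _ ≤ ∏ P ∈ S, (1 + (Nat.card K : ℝ)⁻¹ ^ P.natDegree) :=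
        sum_pow_natDegree_le_prod_one_add (fun P hP => (hS P hP).1.ne_zero) hfactor (by positivity)
    _ ≤ Real.exp (∑ P ∈ S, (Nat.card K : ℝ)⁻¹ ^ P.natDegree) :=
        Real.prod_one_add_le_exp_sum S fun _ => by positivity
    _ ≤ Real.exp (2 + Real.log D) :=
        Real.exp_le_exp.2 (sum_inv_pow_natDegree_le_two_add_log
          (fun P hP => ⟨(hS P hP).1, (hS P hP).2.1⟩) hcard)
    _ = Real.exp 2 * D := by rw [Real.exp_add, Real.exp_log hD]

theorem clog_mul_self_le_log {b T : ℕ} (hb : 1 < b) (hT : 2 ≤ T) :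
    (Nat.clog b (T * T) : ℝ) ≤ 5 * Real.log T := by
  set D := Nat.clog b (T * T)
  have hpow : 2 ^ (D - 1) < T * T :=
    (Nat.pow_le_pow_left hb _).trans_lt (Nat.pow_pred_clog_lt_self hb (by nlinarith))
  have hlog : ((D - 1 : ℕ) : ℝ) * Real.log 2 < Real.log T + Real.log T := by
    rw [← Real.log_pow, ← Real.log_mul (by positivity) (by positivity)]
    exact Real.log_lt_log (by positivity) (by exact_mod_cast hpow)
  rw [Nat.cast_sub (Nat.clog_pos hb (by nlinarith)), Nat.cast_one] at hlog
  have h2T : Real.log 2 ≤ Real.log T := Real.log_le_log (by norm_num) (by exact_mod_cast hT)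
  nlinarith [Real.log_two_gt_d9]

theorem finsum_squarefree_polyOrd_le_le_log {K : Type*} [Field K] [Finite K] {T : ℕ} (hT : 2 ≤ T) :
    ∑ᶠ G ∈ {G : K[X] | Squarefree G ∧ G.Monic ∧ ¬X ∣ G ∧ polyOrd G ≤ T},
      (Nat.card K : ℝ)⁻¹ ^ G.natDegree ≤ 40 * Real.log T := by
  have hexp : Real.exp 2 ≤ 8 := by
    rw [show (2 : ℝ) = 1 + 1 by norm_num, Real.exp_add]
    nlinarith [Real.exp_pos 1, Real.exp_one_lt_d9]
  calc _ ≤ Real.exp 2 * Nat.clog (Nat.card K) (T * T) := finsum_squarefree_polyOrd_le_le_exp hT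
    _ ≤ 8 * (5 * Real.log T) :=
        mul_le_mul hexp (clog_mul_self_le_log Finite.one_lt_card hT) (by positivity) (by norm_num)
    _ = 40 * Real.log T := by ring

theorem tendsto_div_self_of_le_mul_log {f : ℝ → ℝ} {C : ℝ} (hf : ∀ᶠ t in atTop, 0 ≤ f t)
    (hle : ∀ᶠ t in atTop, f t ≤ C * Real.log t) : Tendsto (fun t => f t / t) atTop (nhds 0) := by
  have hlog : Tendsto (fun t => C * (Real.log t / t)) atTop (nhds 0) := by
    simpa using Real.isLittleO_log_id_atTop.tendsto_div_nhds_zero.const_mul C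
  refine tendsto_of_tendsto_of_tendsto_of_le_of_le' tendsto_const_nhds hlog ?_ ?_
  · filter_upwards [hf, eventually_ge_atTop 0] with t h0 ht using div_nonneg h0 ht
  · filter_upwards [hle, eventually_gt_atTop 0] with t h ht
    rw [← mul_div_assoc]
    exact div_le_div_of_nonneg_right h ht.le

theorem R_star_growth_general
    (q : ℕ)
    (Fq : Type) [Field Fq] [Fintype Fq] (hcard : Fintype.card Fq = q)
    (R : ℝ → ℝ)
    (hR : ∀ t : ℝ, R t = ∑ᶠ G ∈ {G : Polynomial Fq | Squarefree G ∧ G.Monic ∧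
        ¬ (X : Polynomial Fq) ∣ G ∧ (polyOrd G : ℝ) ≤ t},
      1 / (q : ℝ) ^ G.natDegree) :
    Tendsto (fun t : ℝ => R t / t) atTop (nhds 0) ∧
      ∃ C : ℝ, 0 < C ∧ ∀ t : ℝ, 2 ≤ t → R t ≤ C * Real.log t := by
  have hR_floor : ∀ t : ℝ, 0 ≤ t → R t = ∑ᶠ G ∈ {G : Fq[X] | Squarefree G ∧ G.Monic ∧
      ¬X ∣ G ∧ polyOrd G ≤ ⌊t⌋₊}, (Nat.card Fq : ℝ)⁻¹ ^ G.natDegree := fun t ht => by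
    simp_rw [hR, Nat.le_floor_iff ht, Nat.card_eq_fintype_card, hcard, inv_pow, one_div]
  have hbound : ∀ t : ℝ, 2 ≤ t → R t ≤ 40 * Real.log t := fun t ht => by
    have hT : 2 ≤ ⌊t⌋₊ := Nat.le_floor (by exact_mod_cast ht)
    rw [hR_floor t (by linarith)]
    refine (finsum_squarefree_polyOrd_le_le_log hT).trans ?_
    gcongr
    exact Nat.floor_le (by linarith)
  have hnonneg : ∀ t : ℝ, 0 ≤ t → 0 ≤ R t := fun t ht => by
    rw [hR_floor t ht]
    exact finsum_nonneg fun G => finsum_nonneg fun _ => by positivity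
  exact ⟨tendsto_div_self_of_le_mul_log (eventually_ge_atTop 0 |>.mono hnonneg)
      (eventually_ge_atTop 2 |>.mono hbound), 40, by norm_num, hbound⟩

/-- **Growth of the truncated sum `R^*(t)`.**
For `t ≥ 1` let `R(t) = ∑_G 1/q^{deg G}`, the sum over all squarefree monic
polynomials `G ∈ F_q[X]` not divisible by `X` with `ord(G) ≤ t`.  Then
`R(t) = o(t)` as `t → ∞`; in fact `R(t) = O(log t)`. -/
theorem R_star_growth
    (q : ℕ) (hq : ∃ p m : ℕ, p.Prime ∧ 0 < m ∧ q = p ^ m)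
    (Fq : Type) [Field Fq] [Fintype Fq] (hcard : Fintype.card Fq = q)
    (R : ℝ → ℝ)
    (hR : ∀ t : ℝ, R t = ∑ᶠ G ∈ {G : Polynomial Fq | Squarefree G ∧ G.Monic ∧
        ¬ (X : Polynomial Fq) ∣ G ∧ (polyOrd G : ℝ) ≤ t},
      1 / (q : ℝ) ^ G.natDegree) :
    Tendsto (fun t : ℝ => R t / t) atTop (nhds 0) ∧
      ∃ C : ℝ, 0 < C ∧ ∀ t : ℝ, 2 ≤ t → R t ≤ C * Real.log t :=
  R_star_growth_general q Fq hcard R hR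
end

section
/- Let q be a prime power ≥ 2 and i a positive integer. Then ∏_{j=1}^{i} (1 + 1/q^j)^{N_j} ≤ e·i, where N_j denotes the number of monic irreducible polynomials of degree j over F_q and e is Euler's number. -/
/-!
Every monic irreducible `f` of degree `j` over `𝔽_q` divides `X ^ q ^ j - X`, and distinct ones are
coprime, so `j * N_j ≤ q ^ j`. Hence `(1 + q⁻ʲ) ^ N_j ≤ exp (N_j / q ^ j) ≤ exp (1 / j)`, and the
product is at most `exp (H_i) ≤ exp (1 + log i) = e * i`.
-/

open Polynomial

theorem Polynomial.sum_natDegree_le_of_forall_monic_irreducible_dvd {K : Type*} [Field K]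
    {D : K[X]} (hD : D ≠ 0) (T : Finset K[X])
    (hT : ∀ f ∈ T, f.Monic ∧ Irreducible f ∧ f ∣ D) :
    ∑ f ∈ T, f.natDegree ≤ D.natDegree := by
  have hcoprime : (T : Set K[X]).Pairwise (Function.onFun IsCoprime id) := by
    intro f hf g hg hfg
    obtain ⟨hf_monic, hf_irr, -⟩ := hT f hf
    obtain ⟨hg_monic, hg_irr, -⟩ := hT g hg
    refine hf_irr.coprime_iff_not_dvd.mpr fun hdvd => hfg ?_
    exact eq_of_monic_of_associated hf_monic hg_monic (hf_irr.associated_of_dvd hg_irr hdvd)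
  have hprod_dvd : ∏ f ∈ T, f ∣ D :=
    Finset.prod_dvd_of_coprime hcoprime fun f hf => (hT f hf).2.2
  rw [← natDegree_prod _ _ fun f hf => (hT f hf).1.ne_zero]
  exact natDegree_le_of_dvd hprod_dvd hD

theorem FiniteField.card_monic_irreducible_natDegree_mul_le {K : Type*} [Field K] [Finite K]
    (j : ℕ) :
    Nat.card {f : K[X] // f.Monic ∧ Irreducible f ∧ f.natDegree = j} * j ≤ Nat.card K ^ j := by
  set S : Set K[X] := {f | f.Monic ∧ Irreducible f ∧ f.natDegree = j}
  change Nat.card S * j ≤ _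
  rcases Nat.eq_zero_or_pos j with rfl | hj
  · simp
  rcases S.finite_or_infinite with hS | hS
  swap
  · have := hS.to_subtype
    simp [Nat.card_eq_zero_of_infinite]
  have hD : (X ^ Nat.card K ^ j - X : K[X]) ≠ 0 :=
    X_pow_card_pow_sub_X_ne_zero K hj.ne' Finite.one_lt_card
  have hdvd : ∀ f ∈ hS.toFinset, f.Monic ∧ Irreducible f ∧ f ∣ X ^ Nat.card K ^ j - X := by
    intro f hf
    obtain ⟨hf_monic, hf_irr, rfl⟩ := hS.mem_toFinset.mp hf
    exact ⟨hf_monic, hf_irr, hf_irr.natDegree_dvd_iff_dvd_X_pow_card_pow_sub_X.mp dvd_rfl⟩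
  have hsum := sum_natDegree_le_of_forall_monic_irreducible_dvd hD _ hdvd
  rw [Finset.sum_congr rfl fun f hf => (hS.mem_toFinset.mp hf).2.2, Finset.sum_const,
    smul_eq_mul, X_pow_card_pow_sub_X_natDegree_eq K hj.ne' Finite.one_lt_card] at hsum
  rwa [Nat.card_coe_set_eq, Set.ncard_eq_toFinset_card S hS]

theorem Real.one_add_pow_le_exp_mul {x : ℝ} (hx : -1 ≤ x) (n : ℕ) :
    (1 + x) ^ n ≤ Real.exp (n * x) := by
  rw [Real.exp_nat_mul]
  exact pow_le_pow_left₀ (by linarith) (by linarith [Real.add_one_le_exp x]) n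

theorem Real.one_add_inv_pow_le_exp_inv {x : ℝ} {n j : ℕ} (hx : 0 < x) (hj : 0 < j)
    (h : (n * j : ℝ) ≤ x) : (1 + 1 / x) ^ n ≤ Real.exp (1 / j) := by
  calc (1 + 1 / x) ^ n ≤ Real.exp (n * (1 / x)) :=
        one_add_pow_le_exp_mul (by linarith [one_div_pos.mpr hx]) n
    _ ≤ Real.exp (1 / j) := by
        rw [Real.exp_le_exp, mul_one_div, div_le_div_iff₀ hx (by exact_mod_cast hj), one_mul]
        exact h

theorem Real.exp_harmonic_le {i : ℕ} (hi : 0 < i) : Real.exp (harmonic i) ≤ Real.exp 1 * i := by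
  calc Real.exp (harmonic i) ≤ Real.exp (1 + Real.log i) :=
        Real.exp_le_exp.mpr (harmonic_le_one_add_log i)
    _ = Real.exp 1 * i := by rw [Real.exp_add, Real.exp_log (by exact_mod_cast hi)]

theorem prod_one_add_inv_q_pow_le_general
    (q i : ℕ) (hi : 0 < i)
    (Fq : Type) [Field Fq] [Fintype Fq] (hcard : Fintype.card Fq = q)
    (N : ℕ → ℕ)
    (hN : ∀ j : ℕ, N j =
      Nat.card {F : Polynomial Fq // F.Monic ∧ Irreducible F ∧ F.natDegree = j}) :
    ∏ j ∈ Finset.Icc 1 i, (1 + 1 / (q : ℝ) ^ j) ^ (N j) ≤ Real.exp 1 * i := by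
  rw [Fintype.card_eq_nat_card] at hcard
  have hq : (0 : ℝ) < q := by exact_mod_cast hcard ▸ Nat.card_pos
  have hN_le (j : ℕ) : (N j * j : ℝ) ≤ (q : ℝ) ^ j := by
    exact_mod_cast hN j ▸ hcard ▸ FiniteField.card_monic_irreducible_natDegree_mul_le j
  calc ∏ j ∈ Finset.Icc 1 i, (1 + 1 / (q : ℝ) ^ j) ^ (N j)
      ≤ ∏ j ∈ Finset.Icc 1 i, Real.exp (1 / j) :=
        Finset.prod_le_prod (fun _ _ => by positivity) fun j hj =>
          Real.one_add_inv_pow_le_exp_inv (by positivity) (Finset.mem_Icc.mp hj).1 (hN_le j)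
    _ = Real.exp (harmonic i) := by
        rw [← Real.exp_sum, harmonic_eq_sum_Icc]
        push_cast
        simp only [one_div]
    _ ≤ Real.exp 1 * i := Real.exp_harmonic_le hi

/-- **Product bound.**
Let `q ≥ 2` be a prime power and `i ≥ 1`.  Then
`∏_{j=1}^{i} (1 + 1/q^j)^{N_j} ≤ e·i`, where `N_j` is the number of monic
irreducible polynomials of degree `j` over `F_q` and `e` is Euler's number. -/
theorem prod_one_add_inv_q_pow_le
    (q i : ℕ) (hq : ∃ p m : ℕ, p.Prime ∧ 0 < m ∧ q = p ^ m) (hi : 0 < i)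
    (Fq : Type) [Field Fq] [Fintype Fq] (hcard : Fintype.card Fq = q)
    (N : ℕ → ℕ)
    (hN : ∀ j : ℕ, N j =
      Nat.card {F : Polynomial Fq // F.Monic ∧ Irreducible F ∧ F.natDegree = j}) :
    ∏ j ∈ Finset.Icc 1 i, (1 + 1 / (q : ℝ) ^ j) ^ (N j) ≤ Real.exp 1 * i :=
  prod_one_add_inv_q_pow_le_general q i hi Fq hcard N hN
end

section
/- Let q be a prime power and, for positive integers i and real t ≥ 1, set δ(i, t) = Σ φ(E), the sum over positive integers E ≤ t with ord_E q = i. Then Σ_{1 ≤ i ≤ t} δ(i, t)/q^i = O(log t) as t → ∞. -/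
/-!
Every `E` with `ord_E q = i` divides `q ^ i - 1`, so
`δ(i, t) ≤ ∑_{E ∣ q^i - 1} φ(E) = q ^ i - 1`, while trivially `δ(i, t) ≤ t²`.
Since `q ≥ 2`, the `i`-th term is therefore at most `min(1, t² / 2 ^ i)`,
and these sum to at most `log₂ (t²) + 2 = O(log t)`.
-/

open Finset

noncomputable def orderTotientSum (q i t : ℕ) : ℕ :=
  ∑ E ∈ (Icc 1 t).filter (fun E => orderOf (q : ZMod E) = i), E.totient

theorem finsum_eq_orderTotientSum (q i t : ℕ) :
    ∑ᶠ E ∈ {E : ℕ | 1 ≤ E ∧ E ≤ t ∧ orderOf ((q : ZMod E)) = i}, E.totient =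
      orderTotientSum q i t := by
  rw [orderTotientSum, ← finsum_mem_coe_finset]
  congr 1
  ext E
  simp [and_assoc]

theorem dvd_pow_sub_one_of_orderOf_eq {q i E : ℕ} (h : orderOf (q : ZMod E) = i) :
    E ∣ q ^ i - 1 := by
  have hpow : ((q ^ i : ℕ) : ZMod E) = ((1 : ℕ) : ZMod E) := by
    rw [Nat.cast_pow, Nat.cast_one, ← h, pow_orderOf_eq_one]
  exact Nat.dvd_of_mod_eq_zero
    (Nat.sub_mod_eq_zero_of_mod_eq ((ZMod.natCast_eq_natCast_iff _ _ _).1 hpow))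

theorem orderTotientSum_le_pow_sub_one {q i : ℕ} (hq : 1 < q) (hi : 0 < i) (t : ℕ) :
    orderTotientSum q i t ≤ q ^ i - 1 := by
  have hpos : q ^ i - 1 ≠ 0 := (Nat.sub_pos_of_lt (Nat.one_lt_pow hi.ne' hq)).ne'
  calc orderTotientSum q i t ≤ ∑ E ∈ (q ^ i - 1).divisors, E.totient :=
        sum_le_sum_of_subset fun E hE =>
          Nat.mem_divisors.2 ⟨dvd_pow_sub_one_of_orderOf_eq (mem_filter.1 hE).2, hpos⟩
    _ = q ^ i - 1 := Nat.sum_totient _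

theorem orderTotientSum_le_sq (q i t : ℕ) : orderTotientSum q i t ≤ t ^ 2 := by
  calc orderTotientSum q i t ≤ ∑ E ∈ Icc 1 t, E.totient :=
        sum_le_sum_of_subset (filter_subset _ _)
    _ ≤ #(Icc 1 t) • t :=
        sum_le_card_nsmul _ _ _ fun E hE => (Nat.totient_le E).trans (mem_Icc.1 hE).2
    _ = t ^ 2 := by simp [sq]

/-- The terms with `i ≤ log₂ X` contribute at most `1` each, the others a geometric tail
of total size `< 2`. -/
theorem sum_Icc_le_natLog_add_two {f : ℕ → ℝ} (X n : ℕ)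
    (h_one : ∀ i ∈ Icc 1 n, f i ≤ 1) (h_geom : ∀ i ∈ Icc 1 n, f i ≤ X / 2 ^ i) :
    ∑ i ∈ Icc 1 n, f i ≤ Nat.log 2 X + 2 := by
  set N := Nat.log 2 X
  rw [← sum_filter_add_sum_filter_not _ (· ≤ N)]
  have h_head : ∑ i ∈ (Icc 1 n).filter (· ≤ N), f i ≤ N := by
    calc ∑ i ∈ (Icc 1 n).filter (· ≤ N), f i
        ≤ #((Icc 1 n).filter (· ≤ N)) • (1 : ℝ) :=
          sum_le_card_nsmul _ _ _ fun i hi => h_one i (mem_filter.1 hi).1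
      _ ≤ #(Icc 1 N) • (1 : ℝ) := by
          gcongr
          intro i hi
          simp only [mem_filter, mem_Icc] at hi ⊢
          omega
      _ = N := by simp
  have h_tail : ∑ i ∈ (Icc 1 n).filter (¬ · ≤ N), f i ≤ 2 := by
    have hX : (X : ℝ) < 2 ^ (N + 1) := by exact_mod_cast Nat.lt_pow_succ_log_self one_lt_two X
    calc ∑ i ∈ (Icc 1 n).filter (¬ · ≤ N), f i
        ≤ ∑ i ∈ (Icc 1 n).filter (¬ · ≤ N), X * (1 / 2 : ℝ) ^ i :=
          sum_le_sum fun i hi => by simpa [div_eq_mul_inv] using h_geom i (mem_filter.1 hi).1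
      _ ≤ ∑ i ∈ Ico (N + 1) (n + 1), X * (1 / 2 : ℝ) ^ i := by
          refine sum_le_sum_of_subset_of_nonneg (fun i hi => ?_) fun _ _ _ => by positivity
          simp only [mem_filter, mem_Icc, mem_Ico] at hi ⊢
          omega
      _ ≤ X * ((1 / 2 : ℝ) ^ (N + 1) / (1 - 1 / 2)) := by
          rw [← mul_sum]
          gcongr
          exact geom_sum_Ico_le_of_lt_one (by norm_num) (by norm_num)
      _ = 2 * (X / 2 ^ (N + 1)) := by rw [one_div_pow]; field_simp; ring
      _ ≤ 2 := by
          have : (X : ℝ) / 2 ^ (N + 1) ≤ 1 := (div_le_one (by positivity)).2 hX.le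
          linarith
  linarith

theorem natLog_two_sq_add_two_le {t : ℕ} (ht : 2 ≤ t) :
    (Nat.log 2 (t ^ 2) : ℝ) + 2 ≤ 4 / Real.log 2 * Real.log t := by
  have hlog2 : 0 < Real.log 2 := Real.log_pos one_lt_two
  have hlogt : Real.log 2 ≤ Real.log t := Real.log_le_log two_pos (by exact_mod_cast ht)
  have hN : (Nat.log 2 (t ^ 2) : ℝ) ≤ 2 * Real.log t / Real.log 2 := by
    have := Real.natLog_le_logb (t ^ 2) 2
    rwa [Real.logb, Nat.cast_pow, Real.log_pow, Nat.cast_ofNat] at this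
  have h2 : (2 : ℝ) ≤ 2 * Real.log t / Real.log 2 := by
    rw [le_div_iff₀ hlog2]
    linarith
  calc (Nat.log 2 (t ^ 2) : ℝ) + 2
      ≤ 2 * Real.log t / Real.log 2 + 2 * Real.log t / Real.log 2 := add_le_add hN h2
    _ = 4 / Real.log 2 * Real.log t := by ring

theorem orderTotientSum_div_pow_le_one {q i : ℕ} (hq : 1 < q) (hi : 0 < i) (t : ℕ) :
    (orderTotientSum q i t : ℝ) / (q : ℝ) ^ i ≤ 1 := by
  refine div_le_one_of_le₀ ?_ (by positivity)
  exact_mod_cast (orderTotientSum_le_pow_sub_one hq hi t).trans (Nat.sub_le _ _)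

theorem orderTotientSum_div_pow_le {q : ℕ} (hq : 1 < q) (i t : ℕ) :
    (orderTotientSum q i t : ℝ) / (q : ℝ) ^ i ≤ ((t ^ 2 : ℕ) : ℝ) / 2 ^ i := by
  have hq2 : (2 : ℝ) ≤ q := by exact_mod_cast hq
  exact div_le_div₀ (by positivity) (by exact_mod_cast orderTotientSum_le_sq q i t)
    (by positivity) (pow_le_pow_left₀ zero_le_two hq2 i)

/-- **Logarithmic bound for the weighted totient sums.**
Let `q` be a prime power and, for positive integers `i` and `t`, let
`δ(i, t) = ∑ φ(E)`, the sum over positive integers `E ≤ t` (coprime to `q`)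
whose multiplicative order of `q` modulo `E` equals `i`.  Then
`∑_{1 ≤ i ≤ t} δ(i, t)/q^i = O(log t)` as `t → ∞`. -/
theorem sum_delta_div_q_pow_isBigO_log
    (q : ℕ) (hq : ∃ p m : ℕ, p.Prime ∧ 0 < m ∧ q = p ^ m)
    (δ : ℕ → ℕ → ℕ)
    (hδ : ∀ i t : ℕ, δ i t =
      ∑ᶠ E ∈ {E : ℕ | 1 ≤ E ∧ E ≤ t ∧ orderOf ((q : ZMod E)) = i}, Nat.totient E) :
    ∃ C : ℝ, 0 < C ∧ ∀ t : ℕ, 2 ≤ t →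
      ∑ i ∈ Finset.Icc 1 t, ((δ i t : ℝ) / (q : ℝ) ^ i) ≤ C * Real.log t := by
  obtain ⟨p, m, hp, hm, rfl⟩ := hq
  have hq : 1 < p ^ m := Nat.one_lt_pow hm.ne' hp.one_lt
  refine ⟨4 / Real.log 2, div_pos four_pos (Real.log_pos one_lt_two), fun t ht => ?_⟩
  simp only [hδ, finsum_eq_orderTotientSum]
  calc ∑ i ∈ Icc 1 t, (orderTotientSum (p ^ m) i t : ℝ) / ((p ^ m : ℕ) : ℝ) ^ i
      ≤ Nat.log 2 (t ^ 2) + 2 :=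
        sum_Icc_le_natLog_add_two _ _
          (fun i hi => orderTotientSum_div_pow_le_one hq (mem_Icc.1 hi).1 t)
          (fun i _ => orderTotientSum_div_pow_le hq i t)
    _ ≤ 4 / Real.log 2 * Real.log t := natLog_two_sq_add_two_le ht
end
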